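/- arXiv:1307.7763 — 2 statements merged into one kernel-verified Lean document; each statement's English description precedes it below -/
import Mathlib

section
/- For a finite group G with a normalized 3-cocycle ω, the operators V^ω(g) on (ℂG)^{⊗3} defined by V^ω(g) = Σ_{α,β,γ∈G} [ω(γα⁻¹, αg⁻¹, g) / (ω(βα⁻¹, αg⁻¹, g)·ω(γβ⁻¹, βg⁻¹, g))] |αg⁻¹, βg⁻¹, γg⁻¹⟩⟨α, β, γ| satisfy V^ω(g₁)·V^ω(g₂) = V^ω(g₁g₂) for all g₁,g₂ ∈ G. -/
open scoped BigOperators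
open Matrix

/-- The 3-cocycle condition for a `U(1)`-valued (unit-modulus) function. -/
def IsCocycle {G : Type*} [Group G] (ω : G → G → G → ℂ) : Prop :=
  ∀ a b c d : G, ω a b c * ω a (b * c) d * ω b c d = ω (a * b) c d * ω a b (c * d)

/-- `ω` is normalized: it equals 1 whenever any argument is the identity. -/
def IsNormalized {G : Type*} [Group G] (ω : G → G → G → ℂ) : Prop :=
  ∀ a b c : G, a = 1 ∨ b = 1 ∨ c = 1 → ω a b c = 1

/-- `ω` takes values on the unit circle. -/
def IsUnitary {G : Type*} [Group G] (ω : G → G → G → ℂ) : Prop :=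
  ∀ a b c : G, ‖ω a b c‖ = 1

/-- The twisted symmetry operator `V^ω(g)` on `(ℂG)^{⊗3}`, written as a matrix with
respect to the group-element basis of triples `(α,β,γ)`.  Its only nonzero entries are
`⟨αg⁻¹, βg⁻¹, γg⁻¹| V^ω(g) |α,β,γ⟩ = ω(γα⁻¹, αg⁻¹, g) / (ω(βα⁻¹, αg⁻¹, g)·ω(γβ⁻¹, βg⁻¹, g))`. -/
noncomputable def Vmat {G : Type*} [Group G] [DecidableEq G]
    (ω : G → G → G → ℂ) (g : G) : Matrix (G × G × G) (G × G × G) ℂ :=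
  fun r c =>
    if r = (c.1 * g⁻¹, c.2.1 * g⁻¹, c.2.2 * g⁻¹) then
      ω (c.2.2 * c.1⁻¹) (c.1 * g⁻¹) g /
        (ω (c.2.1 * c.1⁻¹) (c.1 * g⁻¹) g * ω (c.2.2 * c.2.1⁻¹) (c.2.1 * g⁻¹) g)
    else 0

/-!
`V^ω(g)` is the permutation matrix of right translation by `g⁻¹`, weighted by the phase
`t_g(α,γ) / (t_g(α,β) t_g(β,γ))` with `t_g(α,γ) = ω(γα⁻¹, αg⁻¹, g)`. Multiplying two such matrices
composes the translations and multiplies the phases. The cocycle condition at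
`(γα⁻¹, α(g₁g₂)⁻¹, g₁, g₂)` says that `t_{g₁}(αg₂⁻¹, γg₂⁻¹) t_{g₂}(α,γ)` is `t_{g₁g₂}(α,γ)` times the
coboundary `c(γ)/c(α)`, where `c(x) = ω(x(g₁g₂)⁻¹, g₁, g₂)`, and a coboundary cancels out of the phase.
-/

namespace Matrix

variable {n α : Type*} [Fintype n] [DecidableEq n]

def shiftMatrix [Zero α] (σ : n → n) (w : n → α) : Matrix n n α :=
  of fun r c => if r = σ c then w c else 0

theorem shiftMatrix_mul_shiftMatrix [NonUnitalNonAssocSemiring α] (σ τ : n → n) (v w : n → α) :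
    shiftMatrix σ v * shiftMatrix τ w = shiftMatrix (σ ∘ τ) (fun c => v (τ c) * w c) := by
  ext r c
  simp only [mul_apply, shiftMatrix, of_apply, mul_ite, mul_zero, Finset.sum_ite_eq',
    Finset.mem_univ, if_true, Function.comp_apply, ite_mul, zero_mul]

end Matrix

section TriangleRatio

variable {X K : Type*}

def triangleRatio [DivisionCommMonoid K] (t : X → X → K) (α β γ : X) : K :=
  t α γ / (t α β * t β γ)

theorem triangleRatio_mul [DivisionCommMonoid K] (t s : X → X → K) (α β γ : X) :
    triangleRatio (t * s) α β γ = triangleRatio t α β γ * triangleRatio s α β γ := by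
  simp only [triangleRatio, Pi.mul_apply]
  rw [mul_mul_mul_comm, div_mul_div_comm]

theorem triangleRatio_coboundary [CommGroupWithZero K] (c : X → K) (hc : ∀ x, c x ≠ 0)
    (α β γ : X) : triangleRatio (fun a b => c b / c a) α β γ = 1 := by
  simp only [triangleRatio]
  field_simp [hc]

end TriangleRatio

section Transport

variable {G : Type*} [Group G]

def transport (ω : G → G → G → ℂ) (g α γ : G) : ℂ :=
  ω (γ * α⁻¹) (α * g⁻¹) g

theorem Vmat_eq_shiftMatrix [DecidableEq G] (ω : G → G → G → ℂ) (g : G) :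
    Vmat ω g = shiftMatrix (MulOpposite.op g⁻¹ • ·)
      (fun c => triangleRatio (transport ω g) c.1 c.2.1 c.2.2) :=
  rfl

theorem transport_mul_transport_mul {ω : G → G → G → ℂ} (hω : IsCocycle ω) (g₁ g₂ α γ : G) :
    transport ω g₁ (α * g₂⁻¹) (γ * g₂⁻¹) * transport ω g₂ α γ * ω (α * (g₁ * g₂)⁻¹) g₁ g₂ =
      ω (γ * (g₁ * g₂)⁻¹) g₁ g₂ * transport ω (g₁ * g₂) α γ := by
  have h := hω (γ * α⁻¹) (α * (g₁ * g₂)⁻¹) g₁ g₂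
  unfold transport
  convert h using 3 <;> group

theorem triangleRatio_transport_mul {ω : G → G → G → ℂ} (hω : IsCocycle ω)
    (hω0 : ∀ a b c, ω a b c ≠ 0) (g₁ g₂ α β γ : G) :
    triangleRatio (transport ω g₁) (α * g₂⁻¹) (β * g₂⁻¹) (γ * g₂⁻¹) *
        triangleRatio (transport ω g₂) α β γ =
      triangleRatio (transport ω (g₁ * g₂)) α β γ := by
  set c : G → ℂ := fun x => ω (x * (g₁ * g₂)⁻¹) g₁ g₂
  have hc : ∀ x, c x ≠ 0 := fun x => hω0 _ _ _
  have h : (fun a b => transport ω g₁ (a * g₂⁻¹) (b * g₂⁻¹)) * transport ω g₂ =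
      transport ω (g₁ * g₂) * fun a b => c b / c a := by
    funext a b
    simp only [Pi.mul_apply]
    rw [mul_div_assoc', eq_div_iff (hc a), mul_comm _ (c b)]
    exact transport_mul_transport_mul hω g₁ g₂ a b
  calc _ = triangleRatio ((fun a b => transport ω g₁ (a * g₂⁻¹) (b * g₂⁻¹)) * transport ω g₂)
        α β γ := (triangleRatio_mul _ _ α β γ).symm
    _ = _ := by rw [h, triangleRatio_mul, triangleRatio_coboundary c hc, mul_one]

end Transport

theorem Vmat_mul_general {G : Type*} [Group G] [Fintype G] [DecidableEq G]
    (ω : G → G → G → ℂ) (hu : IsUnitary ω) (hω : IsCocycle ω) :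
    ∀ g₁ g₂ : G, Vmat ω g₁ * Vmat ω g₂ = Vmat ω (g₁ * g₂) := by
  intro g₁ g₂
  have hω0 : ∀ a b c, ω a b c ≠ 0 := fun a b c =>
    norm_ne_zero_iff.mp ((hu a b c).symm ▸ one_ne_zero)
  rw [Vmat_eq_shiftMatrix, Vmat_eq_shiftMatrix, Vmat_eq_shiftMatrix, shiftMatrix_mul_shiftMatrix]
  congr 1
  · funext c
    rw [Function.comp_apply, smul_smul, ← MulOpposite.op_mul, _root_.mul_inv_rev]
  · funext c
    exact triangleRatio_transport_mul hω hω0 g₁ g₂ c.1 c.2.1 c.2.2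

theorem Vmat_mul {G : Type*} [Group G] [Fintype G] [DecidableEq G]
    (ω : G → G → G → ℂ) (hu : IsUnitary ω) (hω : IsCocycle ω) (hn : IsNormalized ω) :
    ∀ g₁ g₂ : G, Vmat ω g₁ * Vmat ω g₂ = Vmat ω (g₁ * g₂) :=
  Vmat_mul_general ω hu hω
end

section
/- For a finite group G with a normalized 3-cocycle ω, the operator V^ω(g) on (ℂG)^{⊗3} defined by V^ω(g) = Σ_{α,β,γ} [ω(γα⁻¹, αg⁻¹, g)/(ω(βα⁻¹, αg⁻¹, g)·ω(γβ⁻¹, βg⁻¹, g))] |αg⁻¹, βg⁻¹, γg⁻¹⟩⟨α,β,γ| is unitary, with V^ω(g)† = V^ω(g⁻¹). -/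
open scoped BigOperators
open Matrix

/-!
`V^ω(g)` is the permutation matrix of the right translation `c ↦ c·(g,g,g)` of `G³` times a
diagonal matrix of phases, which have modulus one; hence it is unitary. For the adjoint, the
cocycle identity at `(x, k, g, g⁻¹)` shows that `ω(x,k,g)·ω(x,kg,g⁻¹) = θ(xk)/θ(k)` with
`θ(y) = ω(y,g,g⁻¹)`. The product of the phases of `V^ω(g)` and `V^ω(g⁻¹)` at matching
entries is a quotient of three such factors, whose `θ`'s cancel, so the phases of `V^ω(g⁻¹)`
are the conjugates of those of `V^ω(g)`.
-/

open Equiv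

namespace Matrix

variable {n R : Type*} [Fintype n] [DecidableEq n]

theorem diagonal_mem_unitary [Semiring R] [StarRing R] {d : n → R}
    (hd : ∀ i, d i ∈ unitary R) : diagonal d ∈ unitary (Matrix n n R) := by
  rw [Unitary.mem_iff, star_eq_conjTranspose, diagonal_conjTranspose, diagonal_mul_diagonal,
    diagonal_mul_diagonal, ← diagonal_one]
  exact ⟨congrArg diagonal (funext fun i => Unitary.star_mul_self_of_mem (hd i)),
    congrArg diagonal (funext fun i => Unitary.mul_star_self_of_mem (hd i))⟩

theorem permMatrix_mem_unitary [Semiring R] [StarRing R] (σ : Perm n) :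
    σ.permMatrix R ∈ unitary (Matrix n n R) := by
  rw [Unitary.mem_iff, star_eq_conjTranspose, conjTranspose_permMatrix, ← permMatrix_mul,
    ← permMatrix_mul, mul_inv_cancel, inv_mul_cancel, permMatrix_one]
  exact ⟨rfl, rfl⟩

theorem diagonal_mul_permMatrix [Semiring R] (d : n → R) (σ : Perm n) :
    diagonal d * σ.permMatrix R = σ.permMatrix R * diagonal (d ∘ σ.symm) := by
  ext i j
  rcases eq_or_ne j (σ i) with rfl | h
  · simp [PEquiv.toMatrix_apply]
  · simp [PEquiv.toMatrix_apply, h.symm]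

end Matrix

theorem Complex.mem_unitary_of_norm_eq_one {z : ℂ} (hz : ‖z‖ = 1) : z ∈ unitary ℂ := by
  rw [Unitary.mem_iff_star_mul_self, Complex.star_def, Complex.conj_mul', hz]
  norm_num

section Cocycle

variable {G : Type*} [Group G] {ω : G → G → G → ℂ}

theorem IsUnitary.apply_ne_zero (hu : IsUnitary ω) (a b c : G) : ω a b c ≠ 0 :=
  norm_ne_zero_iff.mp (by rw [hu]; exact one_ne_zero)

theorem IsCocycle.apply_mul_apply_inv_eq_div (hu : IsUnitary ω) (hω : IsCocycle ω)
    (hn : IsNormalized ω) (x k g : G) :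
    ω (x * k⁻¹) k g * ω (x * k⁻¹) (k * g) g⁻¹ = ω x g g⁻¹ / ω k g g⁻¹ := by
  have h := hω (x * k⁻¹) k g g⁻¹
  rw [mul_inv_cancel, hn _ k 1 (Or.inr (Or.inr rfl)), mul_one, inv_mul_cancel_right] at h
  rw [eq_div_iff (hu.apply_ne_zero k g g⁻¹), h]

variable (ω) in
noncomputable def Vphase (g : G) (c : G × G × G) : ℂ :=
  ω (c.2.2 * c.1⁻¹) (c.1 * g⁻¹) g /
    (ω (c.2.1 * c.1⁻¹) (c.1 * g⁻¹) g * ω (c.2.2 * c.2.1⁻¹) (c.2.1 * g⁻¹) g)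

theorem Vphase_mem_unitary (hu : IsUnitary ω) (g : G) (c : G × G × G) :
    Vphase ω g c ∈ unitary ℂ := by
  apply Complex.mem_unitary_of_norm_eq_one
  simp only [Vphase, norm_div, norm_mul, hu _ _ _]
  norm_num

theorem Vphase_mul_Vphase_inv (hu : IsUnitary ω) (hω : IsCocycle ω) (hn : IsNormalized ω)
    (g : G) (c : G × G × G) : Vphase ω g (c * (g, g, g)) * Vphase ω g⁻¹ c = 1 := by
  obtain ⟨a, b, c⟩ := c
  have hψ := hω.apply_mul_apply_inv_eq_div hu hn
  have hθ : ∀ x, ω x g g⁻¹ ≠ 0 := fun x => hu.apply_ne_zero x g g⁻¹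
  calc _ = (ω (c * a⁻¹) a g * ω (c * a⁻¹) (a * g) g⁻¹) /
        ((ω (b * a⁻¹) a g * ω (b * a⁻¹) (a * g) g⁻¹) *
          (ω (c * b⁻¹) b g * ω (c * b⁻¹) (b * g) g⁻¹)) := by
        simp only [Vphase, Prod.mk_mul_mk, _root_.mul_inv_rev, mul_assoc, mul_inv_cancel_left,
          inv_inv, mul_inv_cancel, mul_one]
        ring
    _ = ω c g g⁻¹ / ω a g g⁻¹ / (ω b g g⁻¹ / ω a g g⁻¹ * (ω c g g⁻¹ / ω b g g⁻¹)) :=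
        by rw [hψ, hψ, hψ]
    _ = 1 := by field_simp [hθ]

theorem star_Vphase (hu : IsUnitary ω) (hω : IsCocycle ω) (hn : IsNormalized ω)
    (g : G) (c : G × G × G) : star (Vphase ω g (c * (g, g, g))) = Vphase ω g⁻¹ c :=
  left_inv_eq_right_inv (Unitary.star_mul_self_of_mem (Vphase_mem_unitary hu g _))
    (Vphase_mul_Vphase_inv hu hω hn g c)

variable [Fintype G] [DecidableEq G]

theorem Vmat_eq_permMatrix_mul_diagonal (ω : G → G → G → ℂ) (g : G) :
    Vmat ω g = (Equiv.mulRight (g, g, g)).permMatrix ℂ * diagonal (Vphase ω g) := by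
  ext r c
  have hrow : r = (c.1 * g⁻¹, c.2.1 * g⁻¹, c.2.2 * g⁻¹) ↔ r * (g, g, g) = c :=
    eq_mul_inv_iff_mul_eq (b := c) (c := (g, g, g))
  simp [Vmat, Vphase, PEquiv.toMatrix_apply, hrow]

theorem Vmat_mem_unitary (hu : IsUnitary ω) (g : G) : Vmat ω g ∈ unitary (Matrix _ _ ℂ) := by
  rw [Vmat_eq_permMatrix_mul_diagonal]
  exact mul_mem (permMatrix_mem_unitary _) (diagonal_mem_unitary (Vphase_mem_unitary hu g))

theorem conjTranspose_Vmat (hu : IsUnitary ω) (hω : IsCocycle ω) (hn : IsNormalized ω) (g : G) :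
    (Vmat ω g)ᴴ = Vmat ω g⁻¹ := by
  rw [Vmat_eq_permMatrix_mul_diagonal, conjTranspose_mul, conjTranspose_permMatrix,
    diagonal_conjTranspose, diagonal_mul_permMatrix, Vmat_eq_permMatrix_mul_diagonal]
  congr 2
  · rw [Perm.inv_def, mulRight_symm]
    rfl
  · funext c
    exact star_Vphase hu hω hn g c

end Cocycle

theorem Vmat_unitary {G : Type*} [Group G] [Fintype G] [DecidableEq G]
    (ω : G → G → G → ℂ) (hu : IsUnitary ω) (hω : IsCocycle ω) (hn : IsNormalized ω) :
    ∀ g : G, (Vmat ω g)ᴴ = Vmat ω g⁻¹ ∧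
      Vmat ω g * (Vmat ω g)ᴴ = 1 ∧ (Vmat ω g)ᴴ * Vmat ω g = 1 := by
  intro g
  have hV := Vmat_mem_unitary hu g
  exact ⟨conjTranspose_Vmat hu hω hn g, Unitary.mul_star_self_of_mem hV,
    Unitary.star_mul_self_of_mem hV⟩
end
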